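/- arXiv:0804.4702 — 4 statements merged into one kernel-verified Lean document; each statement's English description precedes it below -/
import Mathlib

section
/- Let S be a (two-sided) restriction semigroup with respect to a subsemilattice E of idempotents, with natural partial order ≤. Define the restricted product on S by: a·b = ab if a⁎ = b⁺, and a·b undefined otherwise. Then (S, ·, ≤) is an inductive category whose set of identities is E, with d(x) = x⁺ and r(x) = x⁎. Moreover, in this inductive category the restriction is f|a = fa, the corestriction is a|f = af, and the meet of identities is e∧f = ef. -/
universe u v w

/-- Identities of a partial binary operation given by definedness relation `D`
and value function `mul`: idempotents acting as left/right identity whenever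
the relevant products are defined. -/
def IsIdOf {C : Type u} (D : C → C → Prop) (mul : C → C → C) (e : C) : Prop :=
  D e e ∧ mul e e = e ∧ (∀ x, D e x → mul e x = x) ∧ (∀ x, D x e → mul x e = x)

/-- A small category, presented as a set with a partial binary operation:
`D x y` means the product `x·y` is defined, and `mul x y` is its value
(meaningful only when `D x y` holds). -/
structure SmallCat (C : Type u) where
  D : C → C → Prop
  mul : C → C → C
  d : C → C
  r : C → C
  /-- (Ca1): ∃ x·(y·z) ↔ ∃ (x·y)·z -/
  ca1 : ∀ x y z : C, (D y z ∧ D x (mul y z)) ↔ (D x y ∧ D (mul x y) z)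
  /-- (Ca1): associativity when defined -/
  ca1_eq : ∀ x y z : C, D x y → D y z → mul x (mul y z) = mul (mul x y) z
  /-- (Ca2): ∃ x·(y·z) ↔ ∃ x·y and ∃ y·z -/
  ca2 : ∀ x y z : C, (D y z ∧ D x (mul y z)) ↔ (D x y ∧ D y z)
  /-- (Ca3): existence and uniqueness of domain and range identities -/
  d_id : ∀ x, IsIdOf D mul (d x)
  r_id : ∀ x, IsIdOf D mul (r x)
  d_def : ∀ x, D (d x) x
  r_def : ∀ x, D x (r x)
  d_unique : ∀ x e, IsIdOf D mul e → D e x → e = d x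
  r_unique : ∀ x e, IsIdOf D mul e → D x e → e = r x
  /-- x·y is defined iff r(x) = d(y) -/
  defined_iff : ∀ x y, D x y ↔ r x = d y

/-- An ordered category: a small category with a partial order satisfying
(Or1)–(Or3), with corestriction `cores a f = a|f` and restriction
`restr f a = f|a`. -/
structure OrdCat (C : Type u) extends SmallCat C where
  le : C → C → Prop
  le_refl : ∀ a, le a a
  le_trans : ∀ a b c, le a b → le b c → le a c
  le_antisymm : ∀ a b, le a b → le b a → a = b
  or1 : ∀ a b a' b', le a a' → le b b' → D a b → D a' b' → le (mul a b) (mul a' b')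
  or2d : ∀ a b, le a b → le (d a) (d b)
  or2r : ∀ a b, le a b → le (r a) (r b)
  cores : C → C → C
  restr : C → C → C
  cores_le : ∀ a f, IsIdOf D mul f → le f (r a) → le (cores a f) a
  cores_r : ∀ a f, IsIdOf D mul f → le f (r a) → r (cores a f) = f
  cores_unique : ∀ a f, IsIdOf D mul f → le f (r a) →
    ∀ b, le b a → r b = f → b = cores a f
  restr_le : ∀ f a, IsIdOf D mul f → le f (d a) → le (restr f a) a
  restr_d : ∀ f a, IsIdOf D mul f → le f (d a) → d (restr f a) = f
  restr_unique : ∀ f a, IsIdOf D mul f → le f (d a) →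
    ∀ b, le b a → d b = f → b = restr f a

/-- An inductive category: an ordered category in which any two identities
have a greatest lower bound among the identities. -/
structure IndCat (C : Type u) extends OrdCat C where
  meet : C → C → C
  meet_id : ∀ e f, IsIdOf D mul e → IsIdOf D mul f → IsIdOf D mul (meet e f)
  meet_le_left : ∀ e f, IsIdOf D mul e → IsIdOf D mul f → le (meet e f) e
  meet_le_right : ∀ e f, IsIdOf D mul e → IsIdOf D mul f → le (meet e f) f
  meet_glb : ∀ e f g, IsIdOf D mul e → IsIdOf D mul f → IsIdOf D mul g →
    le g e → le g f → le g (meet e f)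

/-- The pseudoproduct a⊗b = (a|(r(a)∧d(b))) · ((r(a)∧d(b))|b) of an
inductive category. -/
def IndCat.pp {C : Type u} (K : IndCat C) (a b : C) : C :=
  K.mul (K.cores a (K.meet (K.r a) (K.d b))) (K.restr (K.meet (K.r a) (K.d b)) b)

/-- An inductive groupoid: an inductive category with inverses. -/
structure IndGrpd (C : Type u) extends IndCat C where
  inv : C → C
  inv_def_right : ∀ x, D x (inv x)
  inv_def_left : ∀ x, D (inv x) x
  mul_inv : ∀ x, mul x (inv x) = d x
  inv_mul : ∀ x, mul (inv x) x = r x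

/-- A (two-sided) restriction semigroup with respect to a subsemilattice `E`
of idempotents, with unary operations `plus` (a⁺) and `star` (a⁎). -/
structure RSgrp (S : Type u) where
  mul : S → S → S
  assoc : ∀ a b c : S, mul (mul a b) c = mul a (mul b c)
  E : Set S
  E_idem : ∀ e ∈ E, mul e e = e
  E_comm : ∀ e ∈ E, ∀ f ∈ E, mul e f = mul f e
  E_mul_mem : ∀ e ∈ E, ∀ f ∈ E, mul e f ∈ E
  plus : S → S
  star : S → S
  plus_mem : ∀ a, plus a ∈ E
  star_mem : ∀ a, star a ∈ E
  /-- a R̃_E a⁺ : for all e ∈ E, ea = a ↔ ea⁺ = a⁺ -/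
  plus_spec : ∀ a : S, ∀ e ∈ E, (mul e a = a ↔ mul e (plus a) = plus a)
  /-- a L̃_E a⁎ : for all e ∈ E, ae = a ↔ a⁎e = a⁎ -/
  star_spec : ∀ a : S, ∀ e ∈ E, (mul a e = a ↔ mul (star a) e = star a)
  /-- R̃_E is a left congruence -/
  rtilde_left_cong : ∀ a b c : S,
    (∀ e ∈ E, mul e a = a ↔ mul e b = b) →
    ∀ e ∈ E, (mul e (mul c a) = mul c a ↔ mul e (mul c b) = mul c b)
  /-- L̃_E is a right congruence -/
  ltilde_right_cong : ∀ a b c : S,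
    (∀ e ∈ E, mul a e = a ↔ mul b e = b) →
    ∀ e ∈ E, (mul (mul a c) e = mul a c ↔ mul (mul b c) e = mul b c)
  /-- ae = (ae)⁺a -/
  ae_eq : ∀ a : S, ∀ e ∈ E, mul a e = mul (plus (mul a e)) a
  /-- ea = a(ea)⁎ -/
  ea_eq : ∀ a : S, ∀ e ∈ E, mul e a = mul a (star (mul e a))

/-- The natural partial order of a restriction semigroup: a ≤ b iff a = a⁺b. -/
def RSgrp.NatLe {S : Type u} (R : RSgrp S) (a b : S) : Prop :=
  a = R.mul (R.plus a) b

/-- `K` is the inductive category induced by the restriction semigroup `R`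
via the restricted product and the natural partial order. -/
def InducedIndCat {S : Type u} (R : RSgrp S) (K : IndCat S) : Prop :=
  (∀ a b, K.le a b ↔ R.NatLe a b) ∧
  (∀ a b, K.D a b ↔ R.star a = R.plus b) ∧
  (∀ a b, K.D a b → K.mul a b = R.mul a b) ∧
  (∀ x, K.d x = R.plus x) ∧
  (∀ x, K.r x = R.star x) ∧
  (∀ e, IsIdOf K.D K.mul e ↔ e ∈ R.E) ∧
  (∀ f a, f ∈ R.E → K.le f (K.d a) → K.restr f a = R.mul f a) ∧
  (∀ a f, f ∈ R.E → K.le f (K.r a) → K.cores a f = R.mul a f) ∧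
  (∀ e f, e ∈ R.E → f ∈ R.E → K.meet e f = R.mul e f)

/-- `R` is the restriction semigroup induced by the inductive category `K`
via the pseudoproduct, with E = identities, a⁺ = d(a), a⁎ = r(a). -/
def InducedRSgrp {C : Type u} (K : IndCat C) (R : RSgrp C) : Prop :=
  R.mul = K.pp ∧ R.E = {e | IsIdOf K.D K.mul e} ∧
  (∀ a, R.plus a = K.d a) ∧ (∀ a, R.star a = K.r a)

/-- An inverse semigroup: every element has a unique inverse. -/
structure InvSgrp (S : Type u) where
  mul : S → S → S
  assoc : ∀ a b c : S, mul (mul a b) c = mul a (mul b c)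
  inv : S → S
  inv_spec₁ : ∀ a, mul (mul a (inv a)) a = a
  inv_spec₂ : ∀ a, mul (mul (inv a) a) (inv a) = inv a
  inv_unique : ∀ a b, mul (mul a b) a = a → mul (mul b a) b = b → b = inv a

/-- The natural partial order of an inverse semigroup: a ≤ b iff a = eb for
some idempotent e. -/
def InvSgrp.le {S : Type u} (Si : InvSgrp S) (a b : S) : Prop :=
  ∃ e, Si.mul e e = e ∧ a = Si.mul e b

/-- a⁺ = aa⁻¹ in an inverse semigroup. -/
def InvSgrp.plus {S : Type u} (Si : InvSgrp S) (a : S) : S := Si.mul a (Si.inv a)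

/-- a⁎ = a⁻¹a in an inverse semigroup. -/
def InvSgrp.star {S : Type u} (Si : InvSgrp S) (a : S) : S := Si.mul (Si.inv a) a

/-- A (∨,r)-premorphism between restriction semigroups:
(∨1) (st)θ ≤ (sθ)(tθ); (∨2) s⁺θ ≤ (sθ)⁺ and s⁎θ ≤ (sθ)⁎. -/
def IsVPre {S : Type u} {T : Type v} (R : RSgrp S) (R' : RSgrp T) (θ : S → T) : Prop :=
  (∀ s t, R'.NatLe (θ (R.mul s t)) (R'.mul (θ s) (θ t))) ∧
  (∀ s, R'.NatLe (θ (R.plus s)) (R'.plus (θ s))) ∧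
  (∀ s, R'.NatLe (θ (R.star s)) (R'.star (θ s)))

/-- A (∧,r)-premorphism between restriction semigroups:
(∧1) (sθ)(tθ) ≤ (st)θ; (∧2) (sθ)⁺ ≤ s⁺θ and (sθ)⁎ ≤ s⁎θ. -/
def IsWPre {S : Type u} {T : Type v} (R : RSgrp S) (R' : RSgrp T) (θ : S → T) : Prop :=
  (∀ s t, R'.NatLe (R'.mul (θ s) (θ t)) (θ (R.mul s t))) ∧
  (∀ s, R'.NatLe (R'.plus (θ s)) (θ (R.plus s))) ∧
  (∀ s, R'.NatLe (R'.star (θ s)) (θ (R.star s)))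

/-- An ordered (∧,r)-premorphism: a (∧,r)-premorphism which is also
order-preserving for the natural partial orders. -/
def IsOrderedWPre {S : Type u} {T : Type v} (R : RSgrp S) (R' : RSgrp T) (θ : S → T) : Prop :=
  IsWPre R R' θ ∧ ∀ s t, R.NatLe s t → R'.NatLe (θ s) (θ t)

/-- A strong (∧,r)-premorphism: a (∧,r)-premorphism satisfying
(∧1)′ (sθ)(tθ) = (sθ)⁺·((st)θ) = ((st)θ)·(tθ)⁎. -/
def IsStrongWPre {S : Type u} {T : Type v} (R : RSgrp S) (R' : RSgrp T) (θ : S → T) : Prop :=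
  IsWPre R R' θ ∧
  (∀ s t, R'.mul (θ s) (θ t) = R'.mul (R'.plus (θ s)) (θ (R.mul s t))) ∧
  (∀ s t, R'.mul (θ s) (θ t) = R'.mul (θ (R.mul s t)) (R'.star (θ t)))

/-- An ordered functor between ordered categories. -/
def IsOrderedFunctor {C : Type u} {D : Type v} (K : OrdCat C) (L : OrdCat D)
    (φ : C → D) : Prop :=
  (∀ x y, K.D x y → L.D (φ x) (φ y)) ∧
  (∀ x y, K.D x y → φ (K.mul x y) = L.mul (φ x) (φ y)) ∧
  (∀ x y, K.le x y → L.le (φ x) (φ y))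

/-- (ICP1): if s·t is defined then (sψ)⊗(tψ) ≤ (s·t)ψ. -/
def ICP1 {C : Type u} {D : Type v} (K : IndCat C) (L : IndCat D) (ψ : C → D) : Prop :=
  ∀ s t, K.D s t → L.le (L.pp (ψ s) (ψ t)) (ψ (K.mul s t))

/-- (ICP2): d(sψ) ≤ d(s)ψ and r(sψ) ≤ r(s)ψ. -/
def ICP2 {C : Type u} {D : Type v} (K : IndCat C) (L : IndCat D) (ψ : C → D) : Prop :=
  (∀ s, L.le (L.d (ψ s)) (ψ (K.d s))) ∧ (∀ s, L.le (L.r (ψ s)) (ψ (K.r s)))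

/-- (ICP3): ψ is order-preserving. -/
def ICP3 {C : Type u} {D : Type v} (K : IndCat C) (L : IndCat D) (ψ : C → D) : Prop :=
  ∀ s t, K.le s t → L.le (ψ s) (ψ t)

/-- (ICP4): (aψ)⊗(fψ) ≤ (a⊗f)ψ and (eψ)⊗(aψ) ≤ (e⊗a)ψ for identities e, f. -/
def ICP4 {C : Type u} {D : Type v} (K : IndCat C) (L : IndCat D) (ψ : C → D) : Prop :=
  (∀ a f, IsIdOf K.D K.mul f → L.le (L.pp (ψ a) (ψ f)) (ψ (K.pp a f))) ∧
  (∀ e a, IsIdOf K.D K.mul e → L.le (L.pp (ψ e) (ψ a)) (ψ (K.pp e a)))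

/-- An inductive category prefunctor: (ICP1)–(ICP4). -/
def IsICP {C : Type u} {D : Type v} (K : IndCat C) (L : IndCat D) (ψ : C → D) : Prop :=
  ICP1 K L ψ ∧ ICP2 K L ψ ∧ ICP3 K L ψ ∧ ICP4 K L ψ

/-- (ICP5): d((sψ)⊗(tψ)) = d(sψ)∧d((s⊗t)ψ) and
r((sψ)⊗(tψ)) = r((s⊗t)ψ)∧r(tψ). -/
def ICP5 {C : Type u} {D : Type v} (K : IndCat C) (L : IndCat D) (ψ : C → D) : Prop :=
  (∀ s t, L.d (L.pp (ψ s) (ψ t)) = L.meet (L.d (ψ s)) (L.d (ψ (K.pp s t)))) ∧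
  (∀ s t, L.r (L.pp (ψ s) (ψ t)) = L.meet (L.r (ψ (K.pp s t))) (L.r (ψ t)))

/-- A strong inductive category prefunctor: (ICP1)–(ICP4) together with (ICP5). -/
def IsStrongICP {C : Type u} {D : Type v} (K : IndCat C) (L : IndCat D) (ψ : C → D) : Prop :=
  IsICP K L ψ ∧ ICP5 K L ψ

/-- An ordered groupoid premorphism between inductive groupoids:
(ICP1), (IGP) (gψ)⁻¹ = g⁻¹ψ, and (ICP3). -/
def IsOGP {C : Type u} {D : Type v} (K : IndGrpd C) (L : IndGrpd D) (ψ : C → D) : Prop :=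
  ICP1 K.toIndCat L.toIndCat ψ ∧
  (∀ g, L.inv (ψ g) = ψ (K.inv g)) ∧
  ICP3 K.toIndCat L.toIndCat ψ


namespace RSgrp

variable {S : Type u} (R : RSgrp S)

lemma plus_of_mem {e : S} (he : e ∈ R.E) : R.plus e = e := by
  have h1 : R.mul e (R.plus e) = R.plus e :=
    (R.plus_spec e e he).mp (R.E_idem e he)
  have h2 : R.mul (R.plus e) e = e :=
    (R.plus_spec e (R.plus e) (R.plus_mem e)).mpr (R.E_idem _ (R.plus_mem e))
  calc R.plus e = R.mul e (R.plus e) := h1.symm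
    _ = R.mul (R.plus e) e := R.E_comm e he _ (R.plus_mem e)
    _ = e := h2

lemma star_of_mem {e : S} (he : e ∈ R.E) : R.star e = e := by
  have h1 : R.mul (R.star e) e = R.star e :=
    (R.star_spec e e he).mp (R.E_idem e he)
  have h2 : R.mul e (R.star e) = e :=
    (R.star_spec e (R.star e) (R.star_mem e)).mpr (R.E_idem _ (R.star_mem e))
  calc R.star e = R.mul (R.star e) e := h1.symm
    _ = R.mul e (R.star e) := R.E_comm _ (R.star_mem e) e he
    _ = e := h2

lemma plus_mul_self (a : S) : R.mul (R.plus a) a = a :=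
  (R.plus_spec a _ (R.plus_mem a)).mpr (R.E_idem _ (R.plus_mem a))

lemma mul_star_self (a : S) : R.mul a (R.star a) = a :=
  (R.star_spec a _ (R.star_mem a)).mpr (R.E_idem _ (R.star_mem a))

lemma plus_eq_of_rtilde {a b : S}
    (h : ∀ e ∈ R.E, R.mul e a = a ↔ R.mul e b = b) : R.plus a = R.plus b := by
  have h1 : R.mul (R.plus a) (R.plus b) = R.plus b :=
    (R.plus_spec b _ (R.plus_mem a)).mp ((h _ (R.plus_mem a)).mp (R.plus_mul_self a))
  have h2 : R.mul (R.plus b) (R.plus a) = R.plus a :=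
    (R.plus_spec a _ (R.plus_mem b)).mp ((h _ (R.plus_mem b)).mpr (R.plus_mul_self b))
  calc R.plus a = R.mul (R.plus b) (R.plus a) := h2.symm
    _ = R.mul (R.plus a) (R.plus b) := R.E_comm _ (R.plus_mem b) _ (R.plus_mem a)
    _ = R.plus b := h1

lemma star_eq_of_ltilde {a b : S}
    (h : ∀ e ∈ R.E, R.mul a e = a ↔ R.mul b e = b) : R.star a = R.star b := by
  have h1 : R.mul (R.star a) (R.star b) = R.star a :=
    (R.star_spec a _ (R.star_mem b)).mp ((h _ (R.star_mem b)).mpr (R.mul_star_self b))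
  have h2 : R.mul (R.star b) (R.star a) = R.star b :=
    (R.star_spec b _ (R.star_mem a)).mp ((h _ (R.star_mem a)).mp (R.mul_star_self a))
  calc R.star a = R.mul (R.star a) (R.star b) := h1.symm
    _ = R.mul (R.star b) (R.star a) := R.E_comm _ (R.star_mem a) _ (R.star_mem b)
    _ = R.star b := h2

lemma plus_mul (a b : S) : R.plus (R.mul a b) = R.plus (R.mul a (R.plus b)) :=
  R.plus_eq_of_rtilde (R.rtilde_left_cong b (R.plus b) a (R.plus_spec b))

lemma star_mul (a b : S) : R.star (R.mul a b) = R.star (R.mul (R.star a) b) :=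
  R.star_eq_of_ltilde (R.ltilde_right_cong a (R.star a) b (R.star_spec a))

lemma plus_mul_e {e : S} (he : e ∈ R.E) (a : S) :
    R.plus (R.mul e a) = R.mul e (R.plus a) := by
  calc R.plus (R.mul e a) = R.plus (R.mul e (R.plus a)) := R.plus_mul e a
    _ = R.mul e (R.plus a) := R.plus_of_mem (R.E_mul_mem e he _ (R.plus_mem a))

lemma star_e_mul (a : S) {e : S} (he : e ∈ R.E) :
    R.star (R.mul a e) = R.mul (R.star a) e := by
  calc R.star (R.mul a e) = R.star (R.mul (R.star a) e) := R.star_mul a e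
    _ = R.mul (R.star a) e := R.star_of_mem (R.E_mul_mem _ (R.star_mem a) e he)

lemma plus_mul_of_D {a b : S} (h : R.star a = R.plus b) :
    R.plus (R.mul a b) = R.plus a := by
  rw [R.plus_mul, ← h, R.mul_star_self]

lemma star_mul_of_D {a b : S} (h : R.star a = R.plus b) :
    R.star (R.mul a b) = R.star b := by
  rw [R.star_mul, h, R.plus_mul_self]

lemma natLe_alt {a b : S} : R.NatLe a b ↔ a = R.mul b (R.star a) := by
  unfold NatLe
  constructor
  · intro h
    have h2 := R.ea_eq b (R.plus a) (R.plus_mem a)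
    rw [← h] at h2
    exact h2
  · intro h
    have h2 := R.ae_eq b (R.star a) (R.star_mem a)
    rw [← h] at h2
    exact h2

lemma natLe_of_e {e a b : S} (he : e ∈ R.E) (h : a = R.mul e b) : R.NatLe a b := by
  unfold NatLe
  have hp : R.plus a = R.mul e (R.plus b) := by rw [h, R.plus_mul_e he]
  rw [hp, R.assoc, R.plus_mul_self, ← h]

lemma natLe_trans {a b c : S} (h1 : R.NatLe a b) (h2 : R.NatLe b c) : R.NatLe a c := by
  have h1' : a = R.mul (R.plus a) b := h1
  have h2' : b = R.mul (R.plus b) c := h2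
  have hp : R.plus a = R.mul (R.plus a) (R.plus b) := by
    have := congrArg R.plus h1'
    rwa [R.plus_mul_e (R.plus_mem a)] at this
  show a = R.mul (R.plus a) c
  calc a = R.mul (R.plus a) b := h1'
    _ = R.mul (R.plus a) (R.mul (R.plus b) c) := by rw [← h2']
    _ = R.mul (R.mul (R.plus a) (R.plus b)) c := (R.assoc _ _ _).symm
    _ = R.mul (R.plus a) c := by rw [← hp]

lemma natLe_antisymm {a b : S} (h1 : R.NatLe a b) (h2 : R.NatLe b a) : a = b := by
  have h1' : a = R.mul (R.plus a) b := h1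
  have h2' : b = R.mul (R.plus b) a := h2
  have hp1 : R.plus a = R.mul (R.plus a) (R.plus b) := by
    have := congrArg R.plus h1'
    rwa [R.plus_mul_e (R.plus_mem a)] at this
  have hp2 : R.plus b = R.mul (R.plus b) (R.plus a) := by
    have := congrArg R.plus h2'
    rwa [R.plus_mul_e (R.plus_mem b)] at this
  have hpe : R.plus a = R.plus b := by
    rw [hp1, R.E_comm _ (R.plus_mem a) _ (R.plus_mem b), ← hp2]
  rw [h1', hpe, R.plus_mul_self]

lemma natLe_mul_right {a b b' : S} (h : R.NatLe b b') :
    R.NatLe (R.mul a b) (R.mul a b') := by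
  have hb : b = R.mul (R.plus b) b' := h
  apply R.natLe_of_e (R.plus_mem (R.mul a (R.plus b)))
  calc R.mul a b = R.mul a (R.mul (R.plus b) b') := by conv_lhs => rw [hb]
    _ = R.mul (R.mul a (R.plus b)) b' := (R.assoc _ _ _).symm
    _ = R.mul (R.mul (R.plus (R.mul a (R.plus b))) a) b' := by
        rw [← R.ae_eq a _ (R.plus_mem b)]
    _ = R.mul (R.plus (R.mul a (R.plus b))) (R.mul a b') := R.assoc _ _ _

lemma natLe_mul_left {a a' b : S} (h : R.NatLe a a') :
    R.NatLe (R.mul a b) (R.mul a' b) := by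
  have ha : a = R.mul (R.plus a) a' := h
  apply R.natLe_of_e (R.plus_mem a)
  calc R.mul a b = R.mul (R.mul (R.plus a) a') b := by conv_lhs => rw [ha]
    _ = R.mul (R.plus a) (R.mul a' b) := R.assoc _ _ _

lemma natLe_mul {a b a' b' : S} (h1 : R.NatLe a a') (h2 : R.NatLe b b') :
    R.NatLe (R.mul a b) (R.mul a' b') :=
  R.natLe_trans (R.natLe_mul_right h2) (R.natLe_mul_left h1)

lemma natLe_plus {a b : S} (h : R.NatLe a b) : R.NatLe (R.plus a) (R.plus b) := by
  have h' : a = R.mul (R.plus a) b := h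
  have h1 : R.plus a = R.mul (R.plus a) (R.plus b) := by
    have := congrArg R.plus h'
    rwa [R.plus_mul_e (R.plus_mem a)] at this
  show R.plus a = R.mul (R.plus (R.plus a)) (R.plus b)
  rw [R.plus_of_mem (R.plus_mem a)]
  exact h1

lemma natLe_star {a b : S} (h : R.NatLe a b) : R.NatLe (R.star a) (R.star b) := by
  have ha : a = R.mul b (R.star a) := (R.natLe_alt).mp h
  have h1 : R.star a = R.mul (R.star b) (R.star a) := by
    conv_lhs => rw [ha, R.star_e_mul b (R.star_mem a)]
  show R.star a = R.mul (R.plus (R.star a)) (R.star b)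
  rw [R.plus_of_mem (R.star_mem a), R.E_comm _ (R.star_mem a) _ (R.star_mem b)]
  exact h1

lemma isId_iff (e : S) :
    IsIdOf (fun a b => R.star a = R.plus b) R.mul e ↔ e ∈ R.E := by
  constructor
  · rintro ⟨h1, h2, h3, h4⟩
    have h1' : R.star e = R.plus e := h1
    have hse : R.star (R.star e) = R.plus e := by
      rw [R.star_of_mem (R.star_mem e), h1']
    have h5 := h4 (R.star e) hse
    have h6 : R.mul (R.star e) e = e := by rw [h1']; exact R.plus_mul_self e
    rw [h5] at h6
    rw [← h6]
    exact R.star_mem e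
  · intro he
    refine ⟨?_, R.E_idem e he, ?_, ?_⟩
    · show R.star e = R.plus e
      rw [R.star_of_mem he, R.plus_of_mem he]
    · intro x hx
      have hx' : R.star e = R.plus x := hx
      rw [R.star_of_mem he] at hx'
      rw [hx']
      exact R.plus_mul_self x
    · intro x hx
      have hx' : R.star x = R.plus e := hx
      rw [R.plus_of_mem he] at hx'
      rw [← hx']
      exact R.mul_star_self x

/-- The inductive category induced by a restriction semigroup. -/
def toIndCat : IndCat S where
  D a b := R.star a = R.plus b
  mul := R.mul
  d := R.plus
  r := R.star
  ca1 x y z := by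
    constructor
    · rintro ⟨h1, h2⟩
      have hxy : R.star x = R.plus y := h2.trans (R.plus_mul_of_D h1)
      exact ⟨hxy, (R.star_mul_of_D hxy).trans h1⟩
    · rintro ⟨h1, h2⟩
      have hyz : R.star y = R.plus z := (R.star_mul_of_D h1).symm.trans h2
      exact ⟨hyz, h1.trans (R.plus_mul_of_D hyz).symm⟩
  ca1_eq x y z _ _ := (R.assoc x y z).symm
  ca2 x y z := by
    constructor
    · rintro ⟨h1, h2⟩
      exact ⟨h2.trans (R.plus_mul_of_D h1), h1⟩
    · rintro ⟨h1, h2⟩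
      exact ⟨h2, h1.trans (R.plus_mul_of_D h2).symm⟩
  d_id x := (R.isId_iff _).mpr (R.plus_mem x)
  r_id x := (R.isId_iff _).mpr (R.star_mem x)
  d_def x := R.star_of_mem (R.plus_mem x)
  r_def x := (R.plus_of_mem (R.star_mem x)).symm
  d_unique x e hid hD := by
    have he := (R.isId_iff e).mp hid
    exact (R.star_of_mem he).symm.trans hD
  r_unique x e hid hD := by
    have he := (R.isId_iff e).mp hid
    exact (R.plus_of_mem he).symm.trans hD.symm
  defined_iff x y := Iff.rfl
  le := R.NatLe
  le_refl a := (R.plus_mul_self a).symm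
  le_trans a b c := R.natLe_trans
  le_antisymm a b := R.natLe_antisymm
  or1 a b a' b' h1 h2 _ _ := R.natLe_mul h1 h2
  or2d a b := R.natLe_plus
  or2r a b := R.natLe_star
  cores a f := R.mul a f
  restr f a := R.mul f a
  cores_le a f hid _ := by
    have hf := (R.isId_iff f).mp hid
    exact R.ae_eq a f hf
  cores_r a f hid hle := by
    have hf := (R.isId_iff f).mp hid
    have hle' : f = R.mul (R.plus f) (R.star a) := hle
    rw [R.plus_of_mem hf] at hle'
    calc R.star (R.mul a f) = R.mul (R.star a) f := R.star_e_mul a hf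
      _ = R.mul f (R.star a) := R.E_comm _ (R.star_mem a) f hf
      _ = f := hle'.symm
  cores_unique a f hid hle b hb hrb := by
    have hrb' : R.star b = f := hrb
    have hb' := (R.natLe_alt).mp hb
    rw [hrb'] at hb'
    exact hb'
  restr_le f a hid hle := by
    have hf := (R.isId_iff f).mp hid
    have hle' : f = R.mul (R.plus f) (R.plus a) := hle
    rw [R.plus_of_mem hf] at hle'
    show R.mul f a = R.mul (R.plus (R.mul f a)) a
    rw [R.plus_mul_e hf a, ← hle']
  restr_d f a hid hle := by
    have hf := (R.isId_iff f).mp hid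
    have hle' : f = R.mul (R.plus f) (R.plus a) := hle
    rw [R.plus_of_mem hf] at hle'
    show R.plus (R.mul f a) = f
    rw [R.plus_mul_e hf a, ← hle']
  restr_unique f a hid hle b hb hdb := by
    have hdb' : R.plus b = f := hdb
    have hb' : b = R.mul (R.plus b) a := hb
    rw [hdb'] at hb'
    exact hb'
  meet := R.mul
  meet_id e f h1 h2 :=
    (R.isId_iff _).mpr
      (R.E_mul_mem e ((R.isId_iff e).mp h1) f ((R.isId_iff f).mp h2))
  meet_le_left e f h1 h2 := by
    have he := (R.isId_iff e).mp h1
    have hf := (R.isId_iff f).mp h2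
    show R.mul e f = R.mul (R.plus (R.mul e f)) e
    rw [R.plus_of_mem (R.E_mul_mem e he f hf)]
    calc R.mul e f = R.mul e (R.mul e f) := by
          conv_lhs => rw [← R.E_idem e he, R.assoc]
      _ = R.mul e (R.mul f e) := by rw [R.E_comm e he f hf]
      _ = R.mul (R.mul e f) e := (R.assoc _ _ _).symm
  meet_le_right e f h1 h2 := by
    have he := (R.isId_iff e).mp h1
    have hf := (R.isId_iff f).mp h2
    show R.mul e f = R.mul (R.plus (R.mul e f)) f
    rw [R.plus_of_mem (R.E_mul_mem e he f hf)]
    calc R.mul e f = R.mul e (R.mul f f) := by rw [R.E_idem f hf]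
      _ = R.mul (R.mul e f) f := (R.assoc _ _ _).symm
  meet_glb e f g h1 h2 h3 hge hgf := by
    have he := (R.isId_iff e).mp h1
    have hf := (R.isId_iff f).mp h2
    have hg := (R.isId_iff g).mp h3
    have hge' : g = R.mul (R.plus g) e := hge
    have hgf' : g = R.mul (R.plus g) f := hgf
    rw [R.plus_of_mem hg] at hge' hgf'
    show g = R.mul (R.plus g) (R.mul e f)
    rw [R.plus_of_mem hg]
    calc g = R.mul g f := hgf'
      _ = R.mul (R.mul g e) f := by conv_lhs => rw [hge']
      _ = R.mul g (R.mul e f) := R.assoc _ _ _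

end RSgrp

/-- A restriction semigroup, under the restricted product
(a·b = ab defined iff a⁎ = b⁺) and the natural partial order, is an inductive
category with identities E, d(x) = x⁺, r(x) = x⁎, restriction f|a = fa,
corestriction a|f = af, and meet e∧f = ef. -/
theorem stmt_1 {S : Type u} (R : RSgrp S) :
    ∃ K : IndCat S, InducedIndCat R K := by
  refine ⟨R.toIndCat, fun a b => Iff.rfl, fun a b => Iff.rfl, fun a b _ => rfl,
    fun x => rfl, fun x => rfl, fun e => R.isId_iff e,
    fun f a _ _ => rfl, fun a f _ _ => rfl, fun e f _ _ => rfl⟩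
end

section
/- Let (C, ·, ≤) be an inductive category with pseudoproduct ⊗. Then (C, ⊗) is a (two-sided) restriction semigroup with respect to its set of identities C_o, with a⁺ = d(a) and a⁎ = r(a) for all a ∈ C. -/
universe u v w

section Aux

variable {C : Type u} (K : IndCat C)

lemma id_d {e : C} (he : IsIdOf K.D K.mul e) : K.d e = e :=
  (K.d_unique e e he he.1).symm

lemma id_r {e : C} (he : IsIdOf K.D K.mul e) : K.r e = e :=
  (K.r_unique e e he he.1).symm

lemma d_mul {a b : C} (h : K.D a b) : K.d (K.mul a b) = K.d a := by
  have h2 : K.D (K.d a) (K.mul a b) := ((K.ca2 (K.d a) a b).mpr ⟨K.d_def a, h⟩).2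
  exact (K.d_unique (K.mul a b) (K.d a) (K.d_id a) h2).symm

lemma r_mul {a b : C} (h : K.D a b) : K.r (K.mul a b) = K.r b := by
  have he : K.mul b (K.r b) = b := (K.r_id b).2.2.2 b (K.r_def b)
  have h2 : K.D (K.mul a b) (K.r b) :=
    ((K.ca1 a b (K.r b)).mp ⟨K.r_def b, by rw [he]; exact h⟩).2
  exact (K.r_unique (K.mul a b) (K.r b) (K.r_id b) h2).symm

lemma restr_self (a : C) : K.restr (K.d a) a = a :=
  (K.restr_unique (K.d a) a (K.d_id a) (K.le_refl _) a (K.le_refl a) rfl).symm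

lemma cores_self (a : C) : K.cores a (K.r a) = a :=
  (K.cores_unique a (K.r a) (K.r_id a) (K.le_refl _) a (K.le_refl a) rfl).symm

lemma eq_cores {a b : C} (h : K.le b a) : b = K.cores a (K.r b) :=
  K.cores_unique a (K.r b) (K.r_id b) (K.or2r _ _ h) b h rfl

lemma eq_restr {a b : C} (h : K.le b a) : b = K.restr (K.d b) a :=
  K.restr_unique (K.d b) a (K.d_id b) (K.or2d _ _ h) b h rfl

lemma cores_trans {a f g : C} (hf : IsIdOf K.D K.mul f) (hg : IsIdOf K.D K.mul g)
    (hgf : K.le g f) (hfa : K.le f (K.r a)) :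
    K.cores (K.cores a f) g = K.cores a g := by
  have h1 := K.cores_le a f hf hfa
  have h2 : K.le g (K.r (K.cores a f)) := by rw [K.cores_r a f hf hfa]; exact hgf
  have h3 := K.cores_le _ g hg h2
  have h4 := K.cores_r _ g hg h2
  exact K.cores_unique a g hg (K.le_trans _ _ _ hgf hfa) _ (K.le_trans _ _ _ h3 h1) h4

lemma restr_trans {a f g : C} (hf : IsIdOf K.D K.mul f) (hg : IsIdOf K.D K.mul g)
    (hgf : K.le g f) (hfa : K.le f (K.d a)) :
    K.restr g (K.restr f a) = K.restr g a := by
  have h1 := K.restr_le f a hf hfa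
  have h2 : K.le g (K.d (K.restr f a)) := by rw [K.restr_d f a hf hfa]; exact hgf
  have h3 := K.restr_le g _ hg h2
  have h4 := K.restr_d g _ hg h2
  exact K.restr_unique g a hg (K.le_trans _ _ _ hgf hfa) _ (K.le_trans _ _ _ h3 h1) h4

lemma id_cores {e f : C} (he : IsIdOf K.D K.mul e) (hf : IsIdOf K.D K.mul f)
    (h : K.le f e) : K.cores e f = f := by
  have h' : K.le f (K.r e) := by rw [id_r K he]; exact h
  exact (K.cores_unique e f hf h' f h (id_r K hf)).symm

lemma id_restr {e f : C} (he : IsIdOf K.D K.mul e) (hf : IsIdOf K.D K.mul f)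
    (h : K.le f e) : K.restr f e = f := by
  have h' : K.le f (K.d e) := by rw [id_d K he]; exact h
  exact (K.restr_unique f e hf h' f h (id_d K hf)).symm

lemma meet_self {e : C} (he : IsIdOf K.D K.mul e) : K.meet e e = e :=
  K.le_antisymm _ _ (K.meet_le_left e e he he)
    (K.meet_glb e e e he he he (K.le_refl e) (K.le_refl e))

lemma meet_comm {e f : C} (he : IsIdOf K.D K.mul e) (hf : IsIdOf K.D K.mul f) :
    K.meet e f = K.meet f e :=
  K.le_antisymm _ _
    (K.meet_glb f e _ hf he (K.meet_id e f he hf) (K.meet_le_right e f he hf)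
      (K.meet_le_left e f he hf))
    (K.meet_glb e f _ he hf (K.meet_id f e hf he) (K.meet_le_right f e hf he)
      (K.meet_le_left f e hf he))

lemma ppD (a b : C) :
    K.D (K.cores a (K.meet (K.r a) (K.d b))) (K.restr (K.meet (K.r a) (K.d b)) b) := by
  have hg : IsIdOf K.D K.mul (K.meet (K.r a) (K.d b)) :=
    K.meet_id _ _ (K.r_id a) (K.d_id b)
  have h1 := K.cores_r a _ hg (K.meet_le_left _ _ (K.r_id a) (K.d_id b))
  have h2 := K.restr_d _ b hg (K.meet_le_right _ _ (K.r_id a) (K.d_id b))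
  exact (K.defined_iff _ _).mpr (by rw [h1, h2])

lemma pp_d (a b : C) :
    K.d (K.pp a b) = K.d (K.cores a (K.meet (K.r a) (K.d b))) :=
  d_mul K (ppD K a b)

lemma pp_r (a b : C) :
    K.r (K.pp a b) = K.r (K.restr (K.meet (K.r a) (K.d b)) b) :=
  r_mul K (ppD K a b)

lemma pp_id_left {e : C} (he : IsIdOf K.D K.mul e) (a : C) :
    K.pp e a = K.restr (K.meet e (K.d a)) a := by
  have hre : K.r e = e := id_r K he
  have hg : IsIdOf K.D K.mul (K.meet e (K.d a)) := K.meet_id _ _ he (K.d_id a)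
  have hge : K.le (K.meet e (K.d a)) e := K.meet_le_left _ _ he (K.d_id a)
  have hgd : K.le (K.meet e (K.d a)) (K.d a) := K.meet_le_right _ _ he (K.d_id a)
  have h1 : K.cores e (K.meet e (K.d a)) = K.meet e (K.d a) := id_cores K he hg hge
  have h2 : K.d (K.restr (K.meet e (K.d a)) a) = K.meet e (K.d a) := K.restr_d _ a hg hgd
  show K.mul (K.cores e (K.meet (K.r e) (K.d a))) (K.restr (K.meet (K.r e) (K.d a)) a) = _
  rw [hre, h1]
  exact hg.2.2.1 _ ((K.defined_iff _ _).mpr (by rw [id_r K hg, h2]))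

lemma pp_id_right (a : C) {e : C} (he : IsIdOf K.D K.mul e) :
    K.pp a e = K.cores a (K.meet (K.r a) e) := by
  have hde : K.d e = e := id_d K he
  have hg : IsIdOf K.D K.mul (K.meet (K.r a) e) := K.meet_id _ _ (K.r_id a) he
  have hge : K.le (K.meet (K.r a) e) e := K.meet_le_right _ _ (K.r_id a) he
  have hgr : K.le (K.meet (K.r a) e) (K.r a) := K.meet_le_left _ _ (K.r_id a) he
  have h1 : K.restr (K.meet (K.r a) e) e = K.meet (K.r a) e := id_restr K he hg hge
  have h2 : K.r (K.cores a (K.meet (K.r a) e)) = K.meet (K.r a) e := K.cores_r a _ hg hgr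
  show K.mul (K.cores a (K.meet (K.r a) (K.d e))) (K.restr (K.meet (K.r a) (K.d e)) e) = _
  rw [hde, h1]
  exact hg.2.2.2 _ ((K.defined_iff _ _).mpr (by rw [id_d K hg, h2]))

lemma pp_id_id {e f : C} (he : IsIdOf K.D K.mul e) (hf : IsIdOf K.D K.mul f) :
    K.pp e f = K.meet e f := by
  rw [pp_id_left K he, id_d K hf]
  exact id_restr K hf (K.meet_id e f he hf) (K.meet_le_right e f he hf)

lemma left_id_iff {e : C} (he : IsIdOf K.D K.mul e) (a : C) :
    K.pp e a = a ↔ K.le (K.d a) e := by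
  have hg : IsIdOf K.D K.mul (K.meet e (K.d a)) := K.meet_id _ _ he (K.d_id a)
  have hge : K.le (K.meet e (K.d a)) e := K.meet_le_left _ _ he (K.d_id a)
  have hgd : K.le (K.meet e (K.d a)) (K.d a) := K.meet_le_right _ _ he (K.d_id a)
  rw [pp_id_left K he]
  constructor
  · intro h
    have h2 : K.d (K.restr (K.meet e (K.d a)) a) = K.meet e (K.d a) := K.restr_d _ a hg hgd
    rw [h] at h2
    rw [h2]; exact hge
  · intro h
    have hda : K.meet e (K.d a) = K.d a :=
      K.le_antisymm _ _ hgd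
        (K.meet_glb e (K.d a) (K.d a) he (K.d_id a) (K.d_id a) h (K.le_refl _))
    rw [hda]; exact restr_self K a

lemma right_id_iff (a : C) {e : C} (he : IsIdOf K.D K.mul e) :
    K.pp a e = a ↔ K.le (K.r a) e := by
  have hg : IsIdOf K.D K.mul (K.meet (K.r a) e) := K.meet_id _ _ (K.r_id a) he
  have hge : K.le (K.meet (K.r a) e) e := K.meet_le_right _ _ (K.r_id a) he
  have hgr : K.le (K.meet (K.r a) e) (K.r a) := K.meet_le_left _ _ (K.r_id a) he
  rw [pp_id_right K a he]
  constructor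
  · intro h
    have h2 : K.r (K.cores a (K.meet (K.r a) e)) = K.meet (K.r a) e := K.cores_r a _ hg hgr
    rw [h] at h2
    rw [h2]; exact hge
  · intro h
    have hra : K.meet (K.r a) e = K.r a :=
      K.le_antisymm _ _ hgr
        (K.meet_glb (K.r a) e (K.r a) (K.r_id a) he (K.r_id a) (K.le_refl _) h)
    rw [hra]; exact cores_self K a

lemma cores_mul {a b f : C} (hD : K.D a b) (hf : IsIdOf K.D K.mul f)
    (hfr : K.le f (K.r b)) :
    K.cores (K.mul a b) f =
      K.mul (K.cores a (K.d (K.cores b f))) (K.cores b f) := by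
  have hc2le := K.cores_le b f hf hfr
  have hc2r := K.cores_r b f hf hfr
  have he' : K.le (K.d (K.cores b f)) (K.r a) := by
    have h1 := K.or2d _ _ hc2le
    rwa [← (K.defined_iff a b).mp hD] at h1
  have hid : IsIdOf K.D K.mul (K.d (K.cores b f)) := K.d_id _
  have hc1le := K.cores_le a _ hid he'
  have hc1r := K.cores_r a _ hid he'
  have hD' : K.D (K.cores a (K.d (K.cores b f))) (K.cores b f) :=
    (K.defined_iff _ _).mpr hc1r
  have hprodle := K.or1 _ _ _ _ hc1le hc2le hD' hD
  have hfr' : K.le f (K.r (K.mul a b)) := by rw [r_mul K hD]; exact hfr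
  exact (K.cores_unique (K.mul a b) f hf hfr' _ hprodle
    (by rw [r_mul K hD', hc2r])).symm

lemma restr_mul {a b f : C} (hD : K.D a b) (hf : IsIdOf K.D K.mul f)
    (hfd : K.le f (K.d a)) :
    K.restr f (K.mul a b) =
      K.mul (K.restr f a) (K.restr (K.r (K.restr f a)) b) := by
  have hc1le := K.restr_le f a hf hfd
  have hc1d := K.restr_d f a hf hfd
  have he' : K.le (K.r (K.restr f a)) (K.d b) := by
    have h1 := K.or2r _ _ hc1le
    rwa [(K.defined_iff a b).mp hD] at h1
  have hid : IsIdOf K.D K.mul (K.r (K.restr f a)) := K.r_id _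
  have hc2le := K.restr_le _ b hid he'
  have hc2d := K.restr_d _ b hid he'
  have hD' : K.D (K.restr f a) (K.restr (K.r (K.restr f a)) b) :=
    (K.defined_iff _ _).mpr hc2d.symm
  have hprodle := K.or1 _ _ _ _ hc1le hc2le hD' hD
  have hfd' : K.le f (K.d (K.mul a b)) := by rw [d_mul K hD]; exact hfd
  exact (K.restr_unique f (K.mul a b) hf hfd' _ hprodle
    (by rw [d_mul K hD', hc1d])).symm

end Aux
section Assoc

variable {C : Type u} (K : IndCat C)

lemma pp_assoc (a b c : C) : K.pp (K.pp a b) c = K.pp a (K.pp b c) := by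
  -- identities e, f
  have hIa := K.r_id a
  have hIbd := K.d_id b
  have hIbr := K.r_id b
  have hIc := K.d_id c
  have he : IsIdOf K.D K.mul (K.meet (K.r a) (K.d b)) := K.meet_id _ _ hIa hIbd
  have heR : K.le (K.meet (K.r a) (K.d b)) (K.r a) := K.meet_le_left _ _ hIa hIbd
  have heD : K.le (K.meet (K.r a) (K.d b)) (K.d b) := K.meet_le_right _ _ hIa hIbd
  have hf : IsIdOf K.D K.mul (K.meet (K.r b) (K.d c)) := K.meet_id _ _ hIbr hIc
  have hfR : K.le (K.meet (K.r b) (K.d c)) (K.r b) := K.meet_le_left _ _ hIbr hIc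
  have hfD : K.le (K.meet (K.r b) (K.d c)) (K.d c) := K.meet_le_right _ _ hIbr hIc
  set e := K.meet (K.r a) (K.d b) with e_def
  set f := K.meet (K.r b) (K.d c) with f_def
  -- factors of a⊗b and b⊗c
  set A1 := K.cores a e with A1_def
  set B1 := K.restr e b with B1_def
  set B2 := K.cores b f with B2_def
  set C2 := K.restr f c with C2_def
  have hA1le : K.le A1 a := K.cores_le a e he heR
  have hA1r : K.r A1 = e := K.cores_r a e he heR
  have hB1le : K.le B1 b := K.restr_le e b he heD
  have hB1d : K.d B1 = e := K.restr_d e b he heD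
  have hB2le : K.le B2 b := K.cores_le b f hf hfR
  have hB2r : K.r B2 = f := K.cores_r b f hf hfR
  have hC2le : K.le C2 c := K.restr_le f c hf hfD
  have hC2d : K.d C2 = f := K.restr_d f c hf hfD
  have DAB : K.D A1 B1 := (K.defined_iff _ _).mpr (by rw [hA1r, hB1d])
  have DBC : K.D B2 C2 := (K.defined_iff _ _).mpr (by rw [hB2r, hC2d])
  have hxr : K.r (K.mul A1 B1) = K.r B1 := r_mul K DAB
  have hyd : K.d (K.mul B2 C2) = K.d B2 := d_mul K DBC
  -- identities h, k
  have hh : IsIdOf K.D K.mul (K.meet (K.r B1) (K.d c)) := K.meet_id _ _ (K.r_id B1) hIc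
  have hhR : K.le (K.meet (K.r B1) (K.d c)) (K.r B1) := K.meet_le_left _ _ (K.r_id B1) hIc
  have hhD : K.le (K.meet (K.r B1) (K.d c)) (K.d c) := K.meet_le_right _ _ (K.r_id B1) hIc
  have hk : IsIdOf K.D K.mul (K.meet (K.r a) (K.d B2)) := K.meet_id _ _ hIa (K.d_id B2)
  have hkR : K.le (K.meet (K.r a) (K.d B2)) (K.r a) := K.meet_le_left _ _ hIa (K.d_id B2)
  have hkD : K.le (K.meet (K.r a) (K.d B2)) (K.d B2) := K.meet_le_right _ _ hIa (K.d_id B2)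
  set h := K.meet (K.r B1) (K.d c) with h_def
  set k := K.meet (K.r a) (K.d B2) with k_def
  -- M and N
  set M := K.cores B1 h with M_def
  set N := K.restr k B2 with N_def
  have hMle : K.le M B1 := K.cores_le B1 h hh hhR
  have hMr : K.r M = h := K.cores_r B1 h hh hhR
  have hMleb : K.le M b := K.le_trans _ _ _ hMle hB1le
  have hNle : K.le N B2 := K.restr_le k B2 hk hkD
  have hNd : K.d N = k := K.restr_d k B2 hk hkD
  have hNleb : K.le N b := K.le_trans _ _ _ hNle hB2le
  -- h ≤ f and k ≤ e
  have hhrb : K.le h (K.r b) := K.le_trans _ _ _ hhR (K.or2r _ _ hB1le)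
  have hhf : K.le h f := K.meet_glb _ _ _ hIbr hIc hh hhrb hhD
  have hkdb : K.le k (K.d b) := K.le_trans _ _ _ hkD (K.or2d _ _ hB2le)
  have hke : K.le k e := K.meet_glb _ _ _ hIa hIbd hk hkR hkdb
  -- M = cores b h and N = restr k b
  have hM_eq : M = K.cores b h := by
    have := eq_cores K hMleb
    rwa [hMr] at this
  have hN_eq : N = K.restr k b := by
    have := eq_restr K hNleb
    rwa [hNd] at this
  -- M ≤ B2 and d M ≤ k
  have hMB2 : K.le M B2 := by
    rw [hM_eq, ← cores_trans K hf hh hhf hfR]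
    exact K.cores_le B2 h hh (by rw [hB2r]; exact hhf)
  have hdMk : K.le (K.d M) k :=
    K.meet_glb _ _ _ hIa (K.d_id B2) (K.d_id M)
      (K.le_trans _ _ _ (by rw [← hB1d]; exact K.or2d _ _ hMle) heR)
      (K.or2d _ _ hMB2)
  -- N ≤ B1 and r N ≤ h
  have hNB1 : K.le N B1 := by
    rw [hN_eq, ← restr_trans K he hk hke heD]
    exact K.restr_le k B1 hk (by rw [hB1d]; exact hke)
  have hrNh : K.le (K.r N) h :=
    K.meet_glb _ _ _ (K.r_id B1) hIc (K.r_id N)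
      (K.or2r _ _ hNB1)
      (by have h1 := K.or2r _ _ hNle; rw [hB2r] at h1
          exact K.le_trans _ _ _ h1 hfD)
  -- N ≤ M
  have hNM : K.le N M := by
    have h1 : N = K.cores (K.cores b h) (K.r N) := by
      rw [cores_trans K hh (K.r_id N) hrNh hhrb]
      exact eq_cores K hNleb
    rw [h1, ← hM_eq]
    exact K.cores_le M (K.r N) (K.r_id N) (by rw [hMr]; exact hrNh)
  -- M ≤ N
  have hMN' : K.le M N := by
    have h1 : M = K.restr (K.d M) (K.restr k b) := by
      rw [restr_trans K hk (K.d_id M) hdMk hkdb]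
      exact eq_restr K hMleb
    rw [h1, ← hN_eq]
    exact K.restr_le (K.d M) N (K.d_id M) (by rw [hNd]; exact hdMk)
  have hMN : M = N := K.le_antisymm _ _ hMN' hNM
  have hdM : K.d M = k := by rw [hMN, hNd]
  have hrN : K.r N = h := by rw [← hMN, hMr]
  -- compute LHS
  have hcak_le : K.le k (K.r a) := hkR
  have hcores_ak_r : K.r (K.cores a k) = k := K.cores_r a k hk hkR
  have LHS_eq : K.pp (K.pp a b) c =
      K.mul (K.mul (K.cores a k) N) (K.restr (K.r N) c) := by
    show K.mul
        (K.cores (K.mul A1 B1) (K.meet (K.r (K.mul A1 B1)) (K.d c)))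
        (K.restr (K.meet (K.r (K.mul A1 B1)) (K.d c)) c) = _
    rw [hxr]
    rw [cores_mul K DAB hh hhR]
    have hA1k : K.cores A1 (K.d M) = K.cores a k := by
      rw [hdM, A1_def, cores_trans K he hk hke heR]
    rw [← M_def, hA1k, hMN, hrN]
  -- compute RHS
  have RHS_eq : K.pp a (K.pp b c) =
      K.mul (K.cores a k) (K.mul N (K.restr (K.r N) c)) := by
    show K.mul
        (K.cores a (K.meet (K.r a) (K.d (K.mul B2 C2))))
        (K.restr (K.meet (K.r a) (K.d (K.mul B2 C2))) (K.mul B2 C2)) = _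
    rw [hyd]
    rw [restr_mul K DBC hk hkD]
    have hfC : K.restr (K.r (K.restr k B2)) C2 = K.restr (K.r N) c := by
      rw [← N_def, C2_def, restr_trans K hf (K.r_id N) (by rw [← hB2r]; exact K.or2r _ _ hNle) hfD]
    rw [← N_def, hfC]
  rw [LHS_eq, RHS_eq]
  have D1 : K.D (K.cores a k) N := (K.defined_iff _ _).mpr (by rw [hcores_ak_r, hNd])
  have hrNdc : K.le (K.r N) (K.d c) := K.le_trans _ _ _ hrNh hhD
  have D2 : K.D N (K.restr (K.r N) c) :=
    (K.defined_iff _ _).mpr (K.restr_d (K.r N) c (K.r_id N) hrNdc).symm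
  exact (K.ca1_eq _ _ _ D1 D2).symm

end Assoc

lemma pp_left_cong_d {C : Type u} (K : IndCat C) {a b : C} (hab : K.d a = K.d b) (c : C) :
    K.d (K.pp c a) = K.d (K.pp c b) := by
  rw [pp_d, pp_d, hab]

lemma pp_right_cong_r {C : Type u} (K : IndCat C) {a b : C} (hab : K.r a = K.r b) (c : C) :
    K.r (K.pp a c) = K.r (K.pp b c) := by
  rw [pp_r, pp_r, hab]

/-- An inductive category under the pseudoproduct is a
restriction semigroup with respect to its identities, with a⁺ = d(a) and
a⁎ = r(a). -/
theorem stmt_4 {C : Type u} (K : IndCat C) :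
    ∃ R : RSgrp C, InducedRSgrp K R := by
  refine ⟨{
    mul := K.pp
    assoc := pp_assoc K
    E := {e | IsIdOf K.D K.mul e}
    E_idem := fun e he => by rw [pp_id_id K he he, meet_self K he]
    E_comm := fun e he f hf => by
      rw [pp_id_id K he hf, pp_id_id K hf he, meet_comm K he hf]
    E_mul_mem := fun e he f hf => by
      rw [pp_id_id K he hf]; exact K.meet_id e f he hf
    plus := K.d
    star := K.r
    plus_mem := fun a => K.d_id a
    star_mem := fun a => K.r_id a
    plus_spec := fun a e he => by
      rw [left_id_iff K he, left_id_iff K he, id_d K (K.d_id a)]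
    star_spec := fun a e he => by
      rw [right_id_iff K a he, right_id_iff K (K.r a) he, id_r K (K.r_id a)]
    rtilde_left_cong := fun a b c H e he => by
      have h1 : K.le (K.d b) (K.d a) :=
        (left_id_iff K (K.d_id a) b).mp
          ((H (K.d a) (K.d_id a)).mp ((left_id_iff K (K.d_id a) a).mpr (K.le_refl _)))
      have h2 : K.le (K.d a) (K.d b) :=
        (left_id_iff K (K.d_id b) a).mp
          ((H (K.d b) (K.d_id b)).mpr ((left_id_iff K (K.d_id b) b).mpr (K.le_refl _)))
      have hd : K.d a = K.d b := K.le_antisymm _ _ h2 h1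
      rw [left_id_iff K he, left_id_iff K he, pp_left_cong_d K hd c]
    ltilde_right_cong := fun a b c H e he => by
      have h1 : K.le (K.r b) (K.r a) :=
        (right_id_iff K b (K.r_id a)).mp
          ((H (K.r a) (K.r_id a)).mp ((right_id_iff K a (K.r_id a)).mpr (K.le_refl _)))
      have h2 : K.le (K.r a) (K.r b) :=
        (right_id_iff K a (K.r_id b)).mp
          ((H (K.r b) (K.r_id b)).mpr ((right_id_iff K b (K.r_id b)).mpr (K.le_refl _)))
      have hr : K.r a = K.r b := K.le_antisymm _ _ h2 h1
      rw [right_id_iff K _ he, right_id_iff K _ he, pp_right_cong_r K hr c]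
    ae_eq := fun a e he => by
      rw [pp_id_right K a he]
      have hg : IsIdOf K.D K.mul (K.meet (K.r a) e) := K.meet_id _ _ (K.r_id a) he
      have hgr : K.le (K.meet (K.r a) e) (K.r a) := K.meet_le_left _ _ (K.r_id a) he
      have hAle : K.le (K.cores a (K.meet (K.r a) e)) a := K.cores_le a _ hg hgr
      have hdA : IsIdOf K.D K.mul (K.d (K.cores a (K.meet (K.r a) e))) := K.d_id _
      rw [pp_id_left K hdA a]
      have hmeet : K.meet (K.d (K.cores a (K.meet (K.r a) e))) (K.d a)
          = K.d (K.cores a (K.meet (K.r a) e)) :=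
        K.le_antisymm _ _ (K.meet_le_left _ _ hdA (K.d_id a))
          (K.meet_glb _ _ _ hdA (K.d_id a) hdA (K.le_refl _) (K.or2d _ _ hAle))
      rw [hmeet]
      exact eq_restr K hAle
    ea_eq := fun a e he => by
      rw [pp_id_left K he a]
      have hg : IsIdOf K.D K.mul (K.meet e (K.d a)) := K.meet_id _ _ he (K.d_id a)
      have hgd : K.le (K.meet e (K.d a)) (K.d a) := K.meet_le_right _ _ he (K.d_id a)
      have hAle : K.le (K.restr (K.meet e (K.d a)) a) a := K.restr_le _ a hg hgd
      have hrA : IsIdOf K.D K.mul (K.r (K.restr (K.meet e (K.d a)) a)) := K.r_id _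
      rw [pp_id_right K a hrA]
      have hmeet : K.meet (K.r a) (K.r (K.restr (K.meet e (K.d a)) a))
          = K.r (K.restr (K.meet e (K.d a)) a) :=
        K.le_antisymm _ _ (K.meet_le_right _ _ (K.r_id a) hrA)
          (K.meet_glb _ _ _ (K.r_id a) hrA hrA (K.or2r _ _ hAle) (K.le_refl _))
      rw [hmeet]
      exact eq_cores K hAle
  }, rfl, rfl, fun a => rfl, fun a => rfl⟩
end

section
/- Let ψ : C → D be an inductive category prefunctor between inductive categories. Then ψ maps identities to identities: if e ∈ C_o then eψ ∈ D_o. -/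
universe u v w

/-- An inductive category prefunctor maps identities to
identities. -/
theorem stmt_11 {C : Type u} {D : Type v} (K : IndCat C) (L : IndCat D)
    (ψ : C → D) (h : IsICP K L ψ) :
    ∀ e, IsIdOf K.D K.mul e → IsIdOf L.D L.mul (ψ e) := by
  intro e he
  set a := ψ e with ha
  -- e = d e in K
  have hde : e = K.d e := K.d_unique e e he he.1
  -- d a ≤ a
  have hdle : L.le (L.d a) a := by
    have h2 := h.2.1.1 e
    rw [← hde] at h2
    exact h2
  have hdid : IsIdOf L.D L.mul (L.d a) := L.d_id a
  -- d (d a) = d a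
  have hdd : L.d (L.d a) = L.d a :=
    (L.d_unique (L.d a) (L.d a) hdid hdid.1).symm
  have hfd : L.le (L.d a) (L.d a) := L.le_refl _
  -- both a and d a equal restr (d a) a
  have h1 : a = L.restr (L.d a) a :=
    L.restr_unique (L.d a) a hdid hfd a (L.le_refl a) rfl
  have h2 : L.d a = L.restr (L.d a) a :=
    L.restr_unique (L.d a) a hdid hfd (L.d a) hdle hdd
  have : a = L.d a := h1.trans h2.symm
  rw [this]
  exact hdid
end

section
/- Let ψ : C → D be an inductive category prefunctor between inductive categories. Then ψ, regarded as a function between the restriction semigroups (C, ⊗) and (D, ⊗) (with respect to C_o and D_o, where a⁺ = d(a) and a⁎ = r(a)), is an ordered (∧,r)-premorphism: (sψ)⊗(tψ) ≤ (s⊗t)ψ, (sψ)⁺ ≤ s⁺ψ, (sψ)⁎ ≤ s⁎ψ, and ψ is order-preserving. -/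
universe u v w

namespace IndCat

variable {C : Type u} (K : IndCat C)

lemma id_d {e : C} (he : IsIdOf K.D K.mul e) : K.d e = e :=
  (K.d_unique e e he he.1).symm

lemma id_r {e : C} (he : IsIdOf K.D K.mul e) : K.r e = e :=
  (K.r_unique e e he he.1).symm

lemma meet_eq_left {e f : C} (he : IsIdOf K.D K.mul e) (hf : IsIdOf K.D K.mul f)
    (hef : K.le e f) : K.meet e f = e :=
  K.le_antisymm _ _ (K.meet_le_left e f he hf)
    (K.meet_glb e f e he hf he (K.le_refl e) hef)

lemma cores_rself (a : C) : K.cores a (K.r a) = a :=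
  (K.cores_unique a (K.r a) (K.r_id a) (K.le_refl _) a (K.le_refl a) rfl).symm

lemma restr_dself (a : C) : K.restr (K.d a) a = a :=
  (K.restr_unique (K.d a) a (K.d_id a) (K.le_refl _) a (K.le_refl a) rfl).symm

lemma cores_of_id {e f : C} (he : IsIdOf K.D K.mul e) (hf : IsIdOf K.D K.mul f)
    (hfe : K.le f e) : K.cores e f = f := by
  have h1 : K.le f (K.r e) := by rw [K.id_r he]; exact hfe
  exact (K.cores_unique e f hf h1 f hfe (K.id_r hf)).symm

lemma restr_of_id {e f : C} (he : IsIdOf K.D K.mul e) (hf : IsIdOf K.D K.mul f)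
    (hfe : K.le f e) : K.restr f e = f := by
  have h1 : K.le f (K.d e) := by rw [K.id_d he]; exact hfe
  exact (K.restr_unique f e hf h1 f hfe (K.id_d hf)).symm

lemma cores_eq_of_le {a a' f : C} (hf : IsIdOf K.D K.mul f) (hfa : K.le f (K.r a))
    (haa' : K.le a a') : K.cores a f = K.cores a' f := by
  have hfa' : K.le f (K.r a') := K.le_trans _ _ _ hfa (K.or2r _ _ haa')
  exact K.cores_unique a' f hf hfa' (K.cores a f)
    (K.le_trans _ _ _ (K.cores_le a f hf hfa) haa') (K.cores_r a f hf hfa)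

lemma restr_eq_of_le {b b' f : C} (hf : IsIdOf K.D K.mul f) (hfb : K.le f (K.d b))
    (hbb' : K.le b b') : K.restr f b = K.restr f b' := by
  have hfb' : K.le f (K.d b') := K.le_trans _ _ _ hfb (K.or2d _ _ hbb')
  exact K.restr_unique f b' hf hfb' (K.restr f b)
    (K.le_trans _ _ _ (K.restr_le f b hf hfb) hbb') (K.restr_d f b hf hfb)

lemma cores_le_cores {a f f' : C} (hf : IsIdOf K.D K.mul f) (hf' : IsIdOf K.D K.mul f')
    (hff' : K.le f f') (hf'a : K.le f' (K.r a)) : K.le (K.cores a f) (K.cores a f') := by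
  set c' := K.cores a f' with hc'
  have hrc' : K.r c' = f' := K.cores_r a f' hf' hf'a
  have hfc' : K.le f (K.r c') := by rw [hrc']; exact hff'
  have hfa : K.le f (K.r a) := K.le_trans _ _ _ hff' hf'a
  have heq : K.cores c' f = K.cores a f :=
    K.cores_eq_of_le hf hfc' (K.cores_le a f' hf' hf'a)
  rw [← heq]
  exact K.cores_le c' f hf hfc'

lemma restr_le_restr {b f f' : C} (hf : IsIdOf K.D K.mul f) (hf' : IsIdOf K.D K.mul f')
    (hff' : K.le f f') (hf'b : K.le f' (K.d b)) : K.le (K.restr f b) (K.restr f' b) := by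
  set c' := K.restr f' b with hc'
  have hdc' : K.d c' = f' := K.restr_d f' b hf' hf'b
  have hfc' : K.le f (K.d c') := by rw [hdc']; exact hff'
  have heq : K.restr f c' = K.restr f b :=
    K.restr_eq_of_le hf hfc' (K.restr_le f' b hf' hf'b)
  rw [← heq]
  exact K.restr_le f c' hf hfc'

/-- Basic data for the pseudoproduct. -/
lemma h_id (a b : C) : IsIdOf K.D K.mul (K.meet (K.r a) (K.d b)) :=
  K.meet_id _ _ (K.r_id a) (K.d_id b)

lemma h_le_r (a b : C) : K.le (K.meet (K.r a) (K.d b)) (K.r a) :=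
  K.meet_le_left _ _ (K.r_id a) (K.d_id b)

lemma h_le_d (a b : C) : K.le (K.meet (K.r a) (K.d b)) (K.d b) :=
  K.meet_le_right _ _ (K.r_id a) (K.d_id b)

lemma pp_defined (a b : C) :
    K.D (K.cores a (K.meet (K.r a) (K.d b))) (K.restr (K.meet (K.r a) (K.d b)) b) := by
  rw [K.defined_iff, K.cores_r a _ (K.h_id a b) (K.h_le_r a b),
    K.restr_d _ b (K.h_id a b) (K.h_le_d a b)]

/-- pp a e = cores a (meet (r a) e) for an identity e. -/
lemma pp_right_id (a : C) {e : C} (he : IsIdOf K.D K.mul e) :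
    K.pp a e = K.cores a (K.meet (K.r a) e) := by
  unfold IndCat.pp
  rw [K.id_d he]
  set h := K.meet (K.r a) e with hh
  have hid : IsIdOf K.D K.mul h := K.meet_id _ _ (K.r_id a) he
  have hle : K.le h e := K.meet_le_right _ _ (K.r_id a) he
  have hler : K.le h (K.r a) := K.meet_le_left _ _ (K.r_id a) he
  rw [K.restr_of_id he hid hle]
  have hD : K.D (K.cores a h) h := by
    rw [K.defined_iff, K.cores_r a h hid hler, K.id_d hid]
  exact hid.2.2.2 _ hD

/-- pp e a = restr (meet e (d a)) a for an identity e. -/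
lemma pp_left_id {e : C} (a : C) (he : IsIdOf K.D K.mul e) :
    K.pp e a = K.restr (K.meet e (K.d a)) a := by
  unfold IndCat.pp
  rw [K.id_r he]
  set h := K.meet e (K.d a) with hh
  have hid : IsIdOf K.D K.mul h := K.meet_id _ _ he (K.d_id a)
  have hle : K.le h e := K.meet_le_left _ _ he (K.d_id a)
  have hled : K.le h (K.d a) := K.meet_le_right _ _ he (K.d_id a)
  rw [K.cores_of_id he hid hle]
  have hD : K.D h (K.restr h a) := by
    rw [K.defined_iff, K.restr_d h a hid hled, K.id_r hid]
  exact hid.2.2.1 _ hD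

/-- Monotonicity of the pseudoproduct. -/
lemma pp_mono {a a' b b' : C} (h1 : K.le a a') (h2 : K.le b b') :
    K.le (K.pp a b) (K.pp a' b') := by
  set h := K.meet (K.r a) (K.d b) with hh
  set h' := K.meet (K.r a') (K.d b') with hh'
  have hid : IsIdOf K.D K.mul h := K.h_id a b
  have hid' : IsIdOf K.D K.mul h' := K.h_id a' b'
  have hhh' : K.le h h' :=
    K.meet_glb _ _ _ (K.r_id a') (K.d_id b') hid
      (K.le_trans _ _ _ (K.h_le_r a b) (K.or2r _ _ h1))
      (K.le_trans _ _ _ (K.h_le_d a b) (K.or2d _ _ h2))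
  have hcle : K.le (K.cores a h) (K.cores a' h') := by
    rw [K.cores_eq_of_le hid (K.h_le_r a b) h1]
    exact K.cores_le_cores hid hid' hhh' (K.h_le_r a' b')
  have hrle : K.le (K.restr h b) (K.restr h' b') := by
    rw [K.restr_eq_of_le hid (K.h_le_d a b) h2]
    exact K.restr_le_restr hid hid' hhh' (K.h_le_d a' b')
  exact K.or1 _ _ _ _ hcle hrle (K.pp_defined a b) (K.pp_defined a' b')

/-- Absorption: pp (cores a h) b = pp a b where h = meet (r a) (d b). -/
lemma pp_cores_left (a b : C) :
    K.pp (K.cores a (K.meet (K.r a) (K.d b))) b = K.pp a b := by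
  set h := K.meet (K.r a) (K.d b) with hh
  have hid : IsIdOf K.D K.mul h := K.h_id a b
  set u := K.cores a h with hu
  have hru : K.r u = h := K.cores_r a h hid (K.h_le_r a b)
  have hmeet : K.meet (K.r u) (K.d b) = h := by
    rw [hru]; exact K.meet_eq_left hid (K.d_id b) (K.h_le_d a b)
  show K.mul (K.cores u (K.meet (K.r u) (K.d b))) (K.restr (K.meet (K.r u) (K.d b)) b)
      = K.mul (K.cores a h) (K.restr h b)
  rw [hmeet, ← hru, K.cores_rself u, hru]

/-- Absorption: pp a (restr h b) = pp a b where h = meet (r a) (d b). -/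
lemma pp_restr_right (a b : C) :
    K.pp a (K.restr (K.meet (K.r a) (K.d b)) b) = K.pp a b := by
  set h := K.meet (K.r a) (K.d b) with hh
  have hid : IsIdOf K.D K.mul h := K.h_id a b
  set v := K.restr h b with hv
  have hdv : K.d v = h := K.restr_d h b hid (K.h_le_d a b)
  have hmeet : K.meet (K.r a) (K.d v) = h := by
    rw [hdv]
    exact K.le_antisymm _ _ (K.meet_le_right _ _ (K.r_id a) hid)
      (K.meet_glb _ _ _ (K.r_id a) hid hid (K.h_le_r a b) (K.le_refl h))
  show K.mul (K.cores a (K.meet (K.r a) (K.d v))) (K.restr (K.meet (K.r a) (K.d v)) v)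
      = K.mul (K.cores a h) (K.restr h b)
  rw [hmeet, ← hdv, K.restr_dself v, hdv]

end IndCat
/-- An inductive category prefunctor, regarded as a function
between the restriction semigroups (C,⊗) and (D,⊗) (with a⁺ = d(a),
a⁎ = r(a) and order coinciding with ≤), is an ordered (∧,r)-premorphism:
(sψ)⊗(tψ) ≤ (s⊗t)ψ, (sψ)⁺ ≤ s⁺ψ, (sψ)⁎ ≤ s⁎ψ, and ψ is order-preserving. -/
theorem stmt_14 {C : Type u} {D : Type v} (K : IndCat C) (L : IndCat D)
    (ψ : C → D) (h : IsICP K L ψ) :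
    (∀ s t, L.le (L.pp (ψ s) (ψ t)) (ψ (K.pp s t))) ∧
    (∀ s, L.le (L.d (ψ s)) (ψ (K.d s))) ∧
    (∀ s, L.le (L.r (ψ s)) (ψ (K.r s))) ∧
    (∀ s t, K.le s t → L.le (ψ s) (ψ t)) := by
  obtain ⟨h1, ⟨h2d, h2r⟩, h3, ⟨h4a, h4b⟩⟩ := h
  refine ⟨?_, h2d, h2r, h3⟩
  intro s t
  set x := ψ s with hx
  set y := ψ t with hy
  set hK := K.meet (K.r s) (K.d t) with hhK
  have hKid : IsIdOf K.D K.mul hK := K.h_id s t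
  set a := K.pp s (K.d t) with ha
  have haK : a = K.cores s hK := by rw [ha, K.pp_right_id s (K.d_id t)]
  have hra : K.r a = hK := by
    rw [haK]; exact K.cores_r s hK hKid (K.h_le_r s t)
  set b := K.pp (K.r a) t with hb
  have hbK : b = K.restr hK t := by
    rw [hb, K.pp_left_id t (K.r_id a), hra,
      K.meet_eq_left hKid (K.d_id t) (K.h_le_d s t)]
  have hdb : K.d b = hK := by
    rw [hbK]; exact K.restr_d hK t hKid (K.h_le_d s t)
  have hDab : K.D a b := by rw [K.defined_iff, hra, hdb]
  have hmul : K.mul a b = K.pp s t := by rw [haK, hbK]; rfl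
  set hL := L.meet (L.r x) (L.d y) with hhL
  have step0 : L.pp x y = L.pp (L.cores x hL) y := (L.pp_cores_left x y).symm
  have step1 : L.cores x hL = L.pp x (L.d y) := (L.pp_right_id x (L.d_id y)).symm
  have step2 : L.le (L.pp x (L.d y)) (ψ a) := by
    have hmono : L.le (L.pp x (L.d y)) (L.pp x (ψ (K.d t))) :=
      L.pp_mono (L.le_refl x) (h2d t)
    exact L.le_trans _ _ _ hmono (h4a s (K.d t) (K.d_id t))
  have stepA : L.le (L.pp x y) (L.pp (ψ a) y) := by
    rw [step0, step1]
    exact L.pp_mono step2 (L.le_refl y)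
  set m := L.meet (L.r (ψ a)) (L.d y) with hm
  have stepB : L.pp (ψ a) y = L.pp (ψ a) (L.restr m y) := (L.pp_restr_right (ψ a) y).symm
  have stepC : L.restr m y = L.pp (L.r (ψ a)) y := (L.pp_left_id y (L.r_id (ψ a))).symm
  have stepD : L.le (L.pp (L.r (ψ a)) y) (ψ b) := by
    have hmono : L.le (L.pp (L.r (ψ a)) y) (L.pp (ψ (K.r a)) y) :=
      L.pp_mono (h2r a) (L.le_refl y)
    exact L.le_trans _ _ _ hmono (h4b (K.r a) t (K.r_id a))
  have stepE : L.le (L.pp (ψ a) y) (L.pp (ψ a) (ψ b)) := by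
    rw [stepB, stepC]
    exact L.pp_mono (L.le_refl (ψ a)) stepD
  have stepF : L.le (L.pp (ψ a) (ψ b)) (ψ (K.pp s t)) := by
    have hicp := h1 a b hDab
    rwa [hmul] at hicp
  exact L.le_trans _ _ _ stepA (L.le_trans _ _ _ stepE stepF)
end
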